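/- Assume the Green function G is exponentially almost periodic. If f : ℝ → X is pseudo almost periodic, then u(t) := ∫_ℝ G(t,s) f(s) ds is pseudo almost periodic; more precisely, if f = g + φ with g almost periodic and φ ∈ PAP₀(ℝ,X), then t ↦ ∫_ℝ G(t,s) g(s) ds is almost periodic and t ↦ ∫_ℝ G(t,s) φ(s) ds belongs to PAP₀(ℝ,X). -/

import Mathlib

/-!
The Green function is dominated by `N e^{-β|t-s|}`, so `u(t) = ∫ G(t,s) f(s) ds` is bounded, and
it is continuous by dominated convergence, `G` being strongly continuous off the diagonal.

Almost periodic part: Bochner's finite-net argument produces, in every interval of a fixed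
length, a common almost period `T` of `g` and of `G` (the latter only for `|t - s| ≥ η`). Then
`u(t+T) - u(t)` is small: on `|t - s| ≤ η` because the window is short, and elsewhere because
`‖G(t+T,s+T) - G(t,s)‖ ≤ min(ε, 2N e^{-β|t-s|}) ≤ √(2Nε) e^{-β|t-s|/2}`.

`PAP₀` part: `‖u(t)‖` is at most `N ∫_{t-R}^{t+R} ‖φ‖` plus a tail `O(e^{-βR/2})`, and the mean
over `[-r, r]` of this moving integral is at most `4R` times the mean of `‖φ‖` over `[-r-R, r+R]`.
-/

open MeasureTheory Real Filter Bornology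

/-- An evolution family on a Banach space `X` together with an exponential dichotomy:
projections `P t`, the inverses `V s t` of the restrictions of `U t s` to the kernels
of the projections (i.e. `V s t = U_Q(s,t)` for `s ≤ t`), dichotomy constants `N, β`
and a bound `H` on the norms of the projections. -/
structure EvolutionDichotomy (X : Type*) [NormedAddCommGroup X] [NormedSpace ℝ X] where
  U : ℝ → ℝ → X →L[ℝ] X
  P : ℝ → X →L[ℝ] X
  V : ℝ → ℝ → X →L[ℝ] X
  N : ℝ
  β : ℝ
  H : ℝ
  N_pos : 0 < N
  β_pos : 0 < β
  U_id : ∀ s, U s s = ContinuousLinearMap.id ℝ X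
  U_comp : ∀ ⦃s r t : ℝ⦄, s ≤ r → r ≤ t → ∀ x, U t r (U r s x) = U t s x
  U_cont : ∀ x : X, ContinuousOn (fun p : ℝ × ℝ => U p.1 p.2 x) {p : ℝ × ℝ | p.2 ≤ p.1}
  P_proj : ∀ t x, P t (P t x) = P t x
  P_cont : ∀ x : X, Continuous fun t => P t x
  P_bound : ∀ t, ‖P t‖ ≤ H
  comm : ∀ ⦃s t : ℝ⦄, s ≤ t → ∀ x, P t (U t s x) = U t s (P s x)
  V_mapsTo : ∀ ⦃s t : ℝ⦄, s ≤ t → ∀ x, P s (V s t (x - P t x)) = 0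
  V_left : ∀ ⦃s t : ℝ⦄, s ≤ t → ∀ x, V s t (U t s (x - P s x)) = x - P s x
  V_right : ∀ ⦃s t : ℝ⦄, s ≤ t → ∀ x, U t s (V s t (x - P t x)) = x - P t x
  P_decay : ∀ ⦃s t : ℝ⦄, s ≤ t → ∀ x, ‖U t s (P s x)‖ ≤ N * Real.exp (-β * (t - s)) * ‖x‖
  Q_decay : ∀ ⦃s t : ℝ⦄, s ≤ t → ∀ x, ‖V s t (x - P t x)‖ ≤ N * Real.exp (-β * (t - s)) * ‖x‖

namespace EvolutionDichotomy

variable {X : Type*} [NormedAddCommGroup X] [NormedSpace ℝ X]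

/-- The complementary projection `Q t = Id - P t`. -/
noncomputable def Q (E : EvolutionDichotomy X) (t : ℝ) : X →L[ℝ] X :=
  ContinuousLinearMap.id ℝ X - E.P t

/-- The Green function of the dichotomy: `G t s = P t ∘ U t s` for `t > s` and
`G t s = -(U_Q(t,s) ∘ Q s)` for `t ≤ s`. -/
noncomputable def G (E : EvolutionDichotomy X) (t s : ℝ) : X →L[ℝ] X :=
  if s < t then (E.P t).comp (E.U t s) else -((E.V t s).comp (E.Q s))

/-- The Green function is exponentially almost periodic. -/
def ExpAP (E : EvolutionDichotomy X) : Prop :=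
  ∀ η > (0:ℝ), ∀ ε > (0:ℝ), ∃ γ > (0:ℝ), ∃ l > (0:ℝ), ∀ a : ℝ,
    ∃ T ∈ Set.Icc a (a + l), ∀ t s : ℝ, η ≤ |t - s| →
      ‖E.G (t + T) (s + T) - E.G t s‖ ≤ ε * Real.exp (-γ * |t - s|)

end EvolutionDichotomy

/-- A bounded continuous function `f : ℝ → X` is (Bohr) almost periodic if for every `ε > 0`
there is `l > 0` such that every interval of length `l` contains an `ε`-almost period. -/
def AlmostPeriodic {X : Type*} [NormedAddCommGroup X] (f : ℝ → X) : Prop :=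
  Continuous f ∧ Bornology.IsBounded (Set.range f) ∧
  ∀ ε > (0:ℝ), ∃ l > (0:ℝ), ∀ a : ℝ, ∃ T ∈ Set.Icc a (a + l),
    ∀ t : ℝ, ‖f (t + T) - f t‖ < ε

/-- A function on `[0,∞)` is asymptotically almost periodic if it is the sum of an almost
periodic function and a continuous function vanishing at infinity. -/
def AsympAlmostPeriodic {X : Type*} [NormedAddCommGroup X] (g : ℝ → X) : Prop :=
  ∃ h φ : ℝ → X, AlmostPeriodic h ∧ ContinuousOn φ (Set.Ici 0) ∧
    Filter.Tendsto (fun t => ‖φ t‖) Filter.atTop (nhds 0) ∧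
    ∀ t : ℝ, 0 ≤ t → g t = h t + φ t

/-- `PAP0`: bounded continuous functions with vanishing mean value. -/
def PAP0 {X : Type*} [NormedAddCommGroup X] (φ : ℝ → X) : Prop :=
  Continuous φ ∧ Bornology.IsBounded (Set.range φ) ∧
  Filter.Tendsto (fun r : ℝ => (1 / (2 * r)) * ∫ t in (-r)..r, ‖φ t‖)
    Filter.atTop (nhds 0)

/-- A bounded continuous function is pseudo almost periodic if it is the sum of an almost
periodic function and a `PAP0` function. -/
def PseudoAP {X : Type*} [NormedAddCommGroup X] (f : ℝ → X) : Prop :=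
  ∃ g φ : ℝ → X, AlmostPeriodic g ∧ PAP0 φ ∧ ∀ t : ℝ, f t = g t + φ t

open Set
open scoped Topology Pointwise

lemma exp_neg_mul_abs_le_one {b : ℝ} (hb : 0 ≤ b) (x : ℝ) : exp (-b * |x|) ≤ 1 :=
  exp_le_one_iff.2 (by nlinarith [abs_nonneg x])

lemma integral_exp_neg_mul_abs {b : ℝ} (hb : 0 < b) : ∫ x : ℝ, exp (-b * |x|) = 2 / b := by
  rw [integral_comp_abs (f := fun x => exp (-b * x)), integral_exp_mul_Ioi (by linarith)]
  field_simp
  simp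

lemma integrable_exp_neg_mul_abs {b : ℝ} (hb : 0 < b) : Integrable fun x : ℝ => exp (-b * |x|) :=
  .of_integral_ne_zero (by rw [integral_exp_neg_mul_abs hb]; positivity)

lemma integral_exp_neg_mul_abs_sub {b : ℝ} (hb : 0 < b) (t : ℝ) :
    ∫ s : ℝ, exp (-b * |t - s|) = 2 / b := by
  rw [integral_sub_left_eq_self (fun x => exp (-b * |x|)), integral_exp_neg_mul_abs hb]

lemma integrable_exp_neg_mul_abs_sub {b : ℝ} (hb : 0 < b) (t : ℝ) :
    Integrable fun s : ℝ => exp (-b * |t - s|) :=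
  (integrable_exp_neg_mul_abs hb).comp_sub_left t

lemma exp_neg_mul_abs_le_of_le {b R x : ℝ} (hb : 0 ≤ b) (hR : R ≤ |x|) :
    exp (-b * |x|) ≤ exp (-(b / 2) * R) * exp (-(b / 2) * |x|) := by
  rw [← exp_add]
  exact exp_le_exp.2 (by nlinarith)

lemma exp_neg_mul_abs_sub_le {b t t₀ s : ℝ} (hb : 0 ≤ b) (ht : |t - t₀| ≤ 1) :
    exp (-b * |t - s|) ≤ exp b * exp (-b * |t₀ - s|) := by
  rw [← exp_add]
  refine exp_le_exp.2 ?_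
  have := abs_sub_abs_le_abs_sub (t₀ - s) (t - s)
  rw [show t₀ - s - (t - s) = -(t - t₀) by ring, abs_neg] at this
  nlinarith

lemma min_le_sqrt_mul {a b : ℝ} (ha : 0 ≤ a) (hb : 0 ≤ b) : min a b ≤ √(a * b) := by
  rw [← sqrt_mul_self (le_min ha hb)]
  exact sqrt_le_sqrt (mul_le_mul (min_le_left a b) (min_le_right a b) (le_min ha hb) ha)

lemma ContinuousAt.clm_apply_of_eventually_bounded {α 𝕜 E F : Type*} [TopologicalSpace α]
    [NontriviallyNormedField 𝕜] [NormedAddCommGroup E] [NormedSpace 𝕜 E] [NormedAddCommGroup F]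
    [NormedSpace 𝕜 F] {A : α → E →L[𝕜] F} {y : α → E} {t₀ : α} {C : ℝ}
    (hA : ContinuousAt (fun t => A t (y t₀)) t₀) (hy : ContinuousAt y t₀)
    (hbound : ∀ᶠ t in 𝓝 t₀, ∀ z, ‖A t z‖ ≤ C * ‖z‖) :
    ContinuousAt (fun t => A t (y t)) t₀ := by
  have hsmall : Tendsto (fun t => A t (y t - y t₀)) (𝓝 t₀) (𝓝 0) := by
    refine squeeze_zero_norm' (hbound.mono fun t ht => ht _) ?_
    simpa using ((hy.sub (continuousAt_const (y := y t₀))).norm.const_mul C).tendsto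
  have hsum := hsmall.add hA
  simp only [← map_add, sub_add_cancel, zero_add] at hsum
  exact hsum

lemma norm_integral_le_of_local_of_tail {X : Type*} [NormedAddCommGroup X] [NormedSpace ℝ X]
    {F : ℝ → X} {f : ℝ → ℝ} (hf : Continuous f) {t R b c : ℝ} (hR : 0 ≤ R) (hb : 0 < b)
    (hc : 0 ≤ c) (hlocal : ∀ s, |t - s| ≤ R → ‖F s‖ ≤ f s)
    (htail : ∀ s, R ≤ |t - s| → ‖F s‖ ≤ c * exp (-b * |t - s|)) :
    ‖∫ s, F s‖ ≤ (∫ s in (t - R)..(t + R), f s) + 2 * c / b := by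
  set K := Icc (t - R) (t + R)
  have hK : ∀ s, s ∈ K ↔ |t - s| ≤ R := fun s => by
    rw [mem_Icc, abs_sub_le_iff]; constructor <;> intro h <;> constructor <;> linarith [h.1, h.2]
  have hexp := (integrable_exp_neg_mul_abs_sub hb t).const_mul c
  have hind : Integrable (K.indicator f) :=
    hf.integrableOn_Icc.integrable_indicator measurableSet_Icc
  refine (norm_integral_le_of_norm_le (g := fun s => K.indicator f s + c * exp (-b * |t - s|))
    (hind.add hexp) (.of_forall fun s => ?_)).trans_eq ?_
  · by_cases hs : s ∈ K
    · rw [indicator_of_mem hs]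
      exact (hlocal s ((hK s).1 hs)).trans (le_add_of_nonneg_right (by positivity))
    · rw [indicator_of_notMem hs, zero_add]
      exact htail s (le_of_lt (not_le.1 (mt (hK s).2 hs)))
  · rw [integral_add hind hexp, integral_indicator measurableSet_Icc, integral_const_mul,
      integral_Icc_eq_integral_Ioc, ← intervalIntegral.integral_of_le (by linarith),
      integral_exp_neg_mul_abs_sub hb]
    ring

lemma exists_pos_lt_of_continuousAt_zero {h : ℝ → ℝ} (hh : ContinuousAt h 0) (h0 : h 0 = 0)
    {ε : ℝ} (hε : 0 < ε) : ∃ δ > 0, h δ < ε := by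
  have hlt : ∀ᶠ δ in 𝓝[>] 0, h δ < ε :=
    nhdsWithin_le_nhds (hh.eventually (gt_mem_nhds (by rwa [h0])))
  obtain ⟨δ, hδ, hδpos⟩ := (hlt.and self_mem_nhdsWithin).exists
  exact ⟨δ, hδpos, hδ⟩

lemma Bornology.IsBounded.exists_forall_norm_le {α X : Type*} [NormedAddCommGroup X] {f : α → X}
    (hf : IsBounded (range f)) : ∃ M, ∀ s, ‖f s‖ ≤ M :=
  hf.exists_norm_le.imp fun _ hM s => hM _ (mem_range_self s)

def IsRelativelyDense (S : Set ℝ) : Prop :=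
  ∃ l > (0 : ℝ), ∀ a : ℝ, ∃ T ∈ Icc a (a + l), T ∈ S

section AlmostPeriodic

variable {X : Type*} [NormedAddCommGroup X] {g : ℝ → X}

lemma AlmostPeriodic.uniformContinuous (hg : AlmostPeriodic g) : UniformContinuous g := by
  rw [Metric.uniformContinuous_iff]
  intro ε hε
  obtain ⟨l, -, hper⟩ := hg.2.2 (ε / 3) (by positivity)
  obtain ⟨δ, hδ, hδg⟩ := Metric.uniformContinuousOn_iff.1
    ((isCompact_Icc (a := -1) (b := l + 1)).uniformContinuousOn_of_continuous hg.1.continuousOn)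
    (ε / 3) (by positivity)
  refine ⟨min δ 1, by positivity, fun {a b} hab => ?_⟩
  obtain ⟨T, hT, hTper⟩ := hper (-b)
  rw [Real.dist_eq, abs_sub_lt_iff] at hab
  have hδ₁ := min_le_left δ 1
  have hδ₂ := min_le_right δ 1
  have hmid : dist (g (a + T)) (g (b + T)) < ε / 3 :=
    hδg _ ⟨by linarith [hT.1], by linarith [hT.2]⟩ _ ⟨by linarith [hT.1], by linarith [hT.2]⟩
      (by rw [Real.dist_eq, abs_sub_lt_iff]; constructor <;> linarith)
  have hleft : dist (g a) (g (a + T)) < ε / 3 := by rw [dist_comm, dist_eq_norm]; exact hTper a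
  have hright : dist (g (b + T)) (g b) < ε / 3 := by rw [dist_eq_norm]; exact hTper b
  linarith [dist_triangle4 (g a) (g (a + T)) (g (b + T)) (g b)]

lemma AlmostPeriodic.exists_finite_translate_net (hg : AlmostPeriodic g) {ε : ℝ} (hε : 0 < ε) :
    ∃ F : Set ℝ, F.Finite ∧ ∀ τ, ∃ σ ∈ F, ∀ t, ‖g (t + τ) - g (t + σ)‖ < ε := by
  obtain ⟨δ, hδ, hδg⟩ := Metric.uniformContinuous_iff.1 hg.uniformContinuous (ε / 2) (half_pos hε)
  obtain ⟨l, -, hper⟩ := hg.2.2 (ε / 2) (half_pos hε)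
  obtain ⟨F, hFl, hF, hcover⟩ := finite_cover_balls_of_compact (isCompact_Icc (a := 0) (b := l)) hδ
  refine ⟨F, hF, fun τ => ?_⟩
  obtain ⟨T, hT, hTper⟩ := hper (-τ)
  obtain ⟨σ, hσF, hσ⟩ := mem_iUnion₂.1
    (hcover (show τ + T ∈ Icc 0 l from ⟨by linarith [hT.1], by linarith [hT.2]⟩))
  refine ⟨σ, hσF, fun t => ?_⟩
  have hnear : ‖g (t + (τ + T)) - g (t + σ)‖ < ε / 2 := by
    rw [← dist_eq_norm]
    exact hδg (by rwa [Real.dist_eq, add_sub_add_left_eq_sub, ← Real.dist_eq])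
  have hshift : ‖g (t + τ) - g (t + (τ + T))‖ < ε / 2 := by
    rw [norm_sub_rev, ← add_assoc]; exact hTper (t + τ)
  linarith [norm_sub_le_norm_sub_add_norm_sub (g (t + τ)) (g (t + (τ + T))) (g (t + σ))]

/-- Bochner's trick: correcting each element of a relatively dense set by one of finitely many
fixed elements produces common almost periods. -/
lemma AlmostPeriodic.isRelativelyDense_sub_inter (hg : AlmostPeriodic g) {S : Set ℝ}
    (hS : IsRelativelyDense S) {ε : ℝ} (hε : 0 < ε) :
    IsRelativelyDense ((S - S) ∩ {T | ∀ t, ‖g (t + T) - g t‖ < ε}) := by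
  obtain ⟨l, hl, hSl⟩ := hS
  obtain ⟨F, hF, hnet⟩ := hg.exists_finite_translate_net (half_pos hε)
  set F' := {σ ∈ F | ∃ v ∈ S, ∀ t, ‖g (t + v) - g (t + σ)‖ < ε / 2}
  choose! v hvS hv using fun σ (hσ : σ ∈ F') => hσ.2
  obtain ⟨L, hL⟩ := ((hF.subset (sep_subset _ _)).image fun σ => |v σ|).bddAbove
  refine ⟨2 * max L 0 + l, by positivity, fun a => ?_⟩
  obtain ⟨w, hw, hwS⟩ := hSl (a + max L 0)
  obtain ⟨σ, hσF, hσ⟩ := hnet w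
  have hσF' : σ ∈ F' := ⟨hσF, w, hwS, hσ⟩
  have hvL := abs_le.1 ((hL (mem_image_of_mem _ hσF')).trans (le_max_left L 0))
  refine ⟨w - v σ, ⟨by linarith [hw.1], by linarith [hw.2]⟩, ⟨w, hwS, v σ, hvS σ hσF', rfl⟩,
    fun t => ?_⟩
  have h₁ := hσ (t - v σ)
  have h₂ := hv σ hσF' (t - v σ)
  rw [sub_add_cancel, norm_sub_rev] at h₂
  rw [show t - v σ + w = t + (w - v σ) by ring] at h₁
  linarith [norm_sub_le_norm_sub_add_norm_sub (g (t + (w - v σ))) (g (t - v σ + σ)) (g t)]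

end AlmostPeriodic

noncomputable def mean (f : ℝ → ℝ) (r : ℝ) : ℝ := 1 / (2 * r) * ∫ t in (-r)..r, f t

section Mean

variable {f w : ℝ → ℝ}

lemma mean_nonneg (hf : ∀ t, 0 ≤ f t) {r : ℝ} (hr : 0 ≤ r) : 0 ≤ mean f r :=
  mul_nonneg (by positivity) (intervalIntegral.integral_nonneg (by linarith) fun t _ => hf t)

lemma mean_const_mul (c : ℝ) : mean (fun t => c * f t) = fun r => c * mean f r := by
  ext r
  simp only [mean, intervalIntegral.integral_const_mul]
  ring

lemma mean_le_mean_add (hf : Continuous f) (hw : Continuous w) {c : ℝ}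
    (hfw : ∀ t, f t ≤ w t + c) {r : ℝ} (hr : 0 < r) : mean f r ≤ mean w r + c := by
  have hmono : ∫ t in (-r)..r, f t ≤ ∫ t in (-r)..r, (w t + c) :=
    intervalIntegral.integral_mono_on (by linarith) (hf.intervalIntegrable _ _)
      ((hw.add continuous_const).intervalIntegrable _ _) fun t _ => hfw t
  rw [intervalIntegral.integral_add (hw.intervalIntegrable _ _) intervalIntegrable_const,
    intervalIntegral.integral_const, smul_eq_mul] at hmono
  calc mean f r ≤ 1 / (2 * r) * ((∫ t in (-r)..r, w t) + (r - -r) * c) :=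
        mul_le_mul_of_nonneg_left hmono (by positivity)
    _ = mean w r + c := by simp only [mean]; field_simp; ring

lemma tendsto_mean_of_forall_le_add (hf : Continuous f) (hf0 : ∀ t, 0 ≤ f t)
    (happrox : ∀ ε > 0, ∃ w : ℝ → ℝ, Continuous w ∧ Tendsto (mean w) atTop (𝓝 0) ∧
      ∀ t, f t ≤ w t + ε) :
    Tendsto (mean f) atTop (𝓝 0) := by
  refine tendsto_order.2 ⟨fun a ha => (eventually_ge_atTop 0).mono fun r hr =>
    ha.trans_le (mean_nonneg hf0 hr), fun a ha => ?_⟩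
  obtain ⟨w, hw, hwmean, hfw⟩ := happrox (a / 2) (half_pos ha)
  filter_upwards [(tendsto_order.1 hwmean).2 (a / 2) (half_pos ha), eventually_gt_atTop 0]
    with r hwr hr
  linarith [mean_le_mean_add hf hw hfw hr]

lemma continuous_integral_sub_add (hf : Continuous f) (R : ℝ) :
    Continuous fun t => ∫ s in (t - R)..(t + R), f s := by
  have hprim := intervalIntegral.continuous_primitive (μ := volume)
    (fun a b => hf.intervalIntegrable a b) 0
  refine ((hprim.comp (continuous_add_const R)).sub (hprim.comp (continuous_sub_right R))).congr
    fun t => ?_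
  exact intervalIntegral.integral_interval_sub_left (hf.intervalIntegrable _ _)
    (hf.intervalIntegrable _ _)

/-- Written through the primitive `Ψ` of `f`, the left side is
`∫_{r-R}^{r+R} Ψ - ∫_{-r-R}^{-r+R} Ψ`, and `Ψ` is monotone: no Fubini is needed. -/
lemma integral_integral_sub_add_le (hf : Continuous f) (hf0 : ∀ t, 0 ≤ f t) {R : ℝ}
    (hR : 0 ≤ R) (r : ℝ) :
    ∫ t in (-r)..r, (∫ s in (t - R)..(t + R), f s) ≤ 2 * R * ∫ s in (-r - R)..(r + R), f s := by
  set Ψ : ℝ → ℝ := fun y => ∫ x in (0 : ℝ)..y, f x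
  have hΨ : Continuous Ψ :=
    intervalIntegral.continuous_primitive (μ := volume) (fun a b => hf.intervalIntegrable a b) 0
  have hsub : ∀ a b, ∫ x in a..b, f x = Ψ b - Ψ a := fun a b =>
    (intervalIntegral.integral_interval_sub_left (hf.intervalIntegrable 0 b)
      (hf.intervalIntegrable 0 a)).symm
  have hmono : Monotone Ψ := fun a b hab => by
    linarith [hsub a b, intervalIntegral.integral_nonneg (μ := volume) hab fun x _ => hf0 x]
  have hint : ∀ a b, IntervalIntegrable Ψ volume a b := fun a b => hΨ.intervalIntegrable a b
  have hupper : ∫ y in (r - R)..(r + R), Ψ y ≤ 2 * R * Ψ (r + R) := by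
    refine (intervalIntegral.integral_mono_on (by linarith) (hint _ _) intervalIntegrable_const
      fun y hy => hmono hy.2).trans_eq ?_
    rw [intervalIntegral.integral_const, smul_eq_mul]
    ring
  have hlower : 2 * R * Ψ (-r - R) ≤ ∫ y in (-r - R)..(-r + R), Ψ y := by
    refine le_of_eq_of_le ?_ (intervalIntegral.integral_mono_on (by linarith)
      intervalIntegrable_const (hint _ _) fun y hy => hmono hy.1)
    rw [intervalIntegral.integral_const, smul_eq_mul]
    ring
  simp only [hsub]
  rw [intervalIntegral.integral_sub (f := fun t => Ψ (t + R)) (g := fun t => Ψ (t - R))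
      ((hΨ.comp (continuous_add_const R)).intervalIntegrable _ _)
      ((hΨ.comp (continuous_sub_right R)).intervalIntegrable _ _),
    intervalIntegral.integral_comp_add_right, intervalIntegral.integral_comp_sub_right,
    ← intervalIntegral.integral_add_adjacent_intervals (hint (-r + R) (r - R)) (hint _ (r + R)),
    ← intervalIntegral.integral_add_adjacent_intervals (hint (-r - R) (-r + R)) (hint _ (r - R))]
  linarith

lemma tendsto_mean_integral_sub_add (hf : Continuous f) (hf0 : ∀ t, 0 ≤ f t)
    (hmean : Tendsto (mean f) atTop (𝓝 0)) {R : ℝ} (hR : 0 ≤ R) :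
    Tendsto (mean fun t => ∫ s in (t - R)..(t + R), f s) atTop (𝓝 0) := by
  have hlim : Tendsto (fun r => 4 * R * mean f (r + R)) atTop (𝓝 0) := by
    simpa using (hmean.comp (tendsto_atTop_add_const_right atTop R tendsto_id)).const_mul (4 * R)
  refine squeeze_zero' ((eventually_ge_atTop 0).mono fun r hr =>
    mean_nonneg (fun t => intervalIntegral.integral_nonneg (by linarith) fun s _ => hf0 s) hr)
    ((eventually_ge_atTop (max R 1)).mono fun r hr => ?_) hlim
  have hr1 : 0 < r := by linarith [le_max_right R 1]
  have hRr : R ≤ r := (le_max_left R 1).trans hr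
  have hm0 : 0 ≤ mean f (r + R) := mean_nonneg hf0 (by linarith)
  have hbound := integral_integral_sub_add_le hf hf0 hR r
  have hmeanRr : ∫ s in (-r - R)..(r + R), f s = 2 * (r + R) * mean f (r + R) := by
    simp only [mean, neg_add']
    field_simp
  calc mean (fun t => ∫ s in (t - R)..(t + R), f s) r
      ≤ 1 / (2 * r) * (2 * R * (2 * (r + R) * mean f (r + R))) :=
        mul_le_mul_of_nonneg_left (hmeanRr ▸ hbound) (by positivity)
    _ = 2 * R * mean f (r + R) + 2 * R * (R / r) * mean f (r + R) := by field_simp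
    _ ≤ 2 * R * mean f (r + R) + 2 * R * 1 * mean f (r + R) := by
        gcongr
        exact (div_le_one hr1).2 hRr
    _ = 4 * R * mean f (r + R) := by ring

end Mean

namespace EvolutionDichotomy

variable {X : Type*} [NormedAddCommGroup X] [NormedSpace ℝ X] (E : EvolutionDichotomy X)

lemma Q_apply (s : ℝ) (x : X) : E.Q s x = x - E.P s x := rfl

lemma G_apply_of_lt {t s : ℝ} (h : s < t) (x : X) : E.G t s x = E.P t (E.U t s x) := by
  simp [G, h]

lemma G_apply_of_le {t s : ℝ} (h : t ≤ s) (x : X) : E.G t s x = -E.V t s (E.Q s x) := by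
  simp [G, not_lt.2 h]

lemma norm_P_apply_le (t : ℝ) (x : X) : ‖E.P t x‖ ≤ E.H * ‖x‖ :=
  (E.P t).le_of_opNorm_le (E.P_bound t) x

lemma norm_U_P_le {s t : ℝ} (h : s ≤ t) (x : X) : ‖E.U t s (E.P s x)‖ ≤ E.N * ‖x‖ :=
  (E.P_decay h x).trans <| by
    gcongr
    exact mul_le_of_le_one_right E.N_pos.le <| exp_le_one_iff.2 <| by
      nlinarith [E.β_pos, sub_nonneg.2 h]

lemma norm_V_Q_le {t s : ℝ} (h : t ≤ s) (x : X) : ‖E.V t s (E.Q s x)‖ ≤ E.N * ‖x‖ :=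
  (E.Q_decay h x).trans <| by
    gcongr
    exact mul_le_of_le_one_right E.N_pos.le <| exp_le_one_iff.2 <| by
      nlinarith [E.β_pos, sub_nonneg.2 h]

lemma norm_G_le (t s : ℝ) : ‖E.G t s‖ ≤ E.N * exp (-E.β * |t - s|) := by
  refine (E.G t s).opNorm_le_bound (by have := E.N_pos; positivity) fun x => ?_
  rcases lt_or_ge s t with h | h
  · rw [G_apply_of_lt E h, E.comm h.le, abs_of_pos (sub_pos.2 h)]
    exact E.P_decay h.le x
  · rw [G_apply_of_le E h, norm_neg, abs_sub_comm, abs_of_nonneg (sub_nonneg.2 h)]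
    exact E.Q_decay h x

lemma norm_G_le_N (t s : ℝ) : ‖E.G t s‖ ≤ E.N :=
  (E.norm_G_le t s).trans <| mul_le_of_le_one_right E.N_pos.le <|
    exp_neg_mul_abs_le_one E.β_pos.le _

lemma norm_G_le_of_le_abs_sub {R t s : ℝ} (hR : R ≤ |t - s|) :
    ‖E.G t s‖ ≤ E.N * exp (-(E.β / 2) * R) * exp (-(E.β / 2) * |t - s|) :=
  (E.norm_G_le t s).trans <| by
    rw [mul_assoc]
    exact mul_le_mul_of_nonneg_left (exp_neg_mul_abs_le_of_le E.β_pos.le hR) E.N_pos.le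

lemma P_V_Q {t s : ℝ} (h : t ≤ s) (x : X) : E.P t (E.V t s (E.Q s x)) = 0 :=
  E.V_mapsTo h x

lemma U_V_Q {t s : ℝ} (h : t ≤ s) (x : X) : E.U s t (E.V t s (E.Q s x)) = E.Q s x :=
  E.V_right h x

lemma V_U_of_P_eq_zero {t s : ℝ} (h : t ≤ s) {y : X} (hy : E.P t y = 0) :
    E.V t s (E.U s t y) = y := by
  simpa [hy] using E.V_left h y

lemma U_Q_eq_U_V_Q {t s s' : ℝ} (h : t ≤ s) (h' : s ≤ s') (x : X) :
    E.U s' s (E.Q s x) = E.U s' t (E.V t s (E.Q s x)) := by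
  rw [← E.U_comp h h', E.U_V_Q h]

lemma V_U_Q {t s s' : ℝ} (h : t ≤ s) (h' : s ≤ s') (x : X) :
    E.V t s' (E.U s' s (E.Q s x)) = E.V t s (E.Q s x) := by
  rw [E.U_Q_eq_U_V_Q h h', E.V_U_of_P_eq_zero (h.trans h') (E.P_V_Q h x)]

lemma U_V_Q_of_le {r t s : ℝ} (h : r ≤ t) (h' : t ≤ s) (x : X) :
    E.U t r (E.V r s (E.Q s x)) = E.V t s (E.Q s x) := by
  have hP : E.P t (E.U t r (E.V r s (E.Q s x))) = 0 := by
    rw [E.comm h, E.P_V_Q (h.trans h'), map_zero]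
  rw [← E.V_U_of_P_eq_zero h' hP, E.U_comp h h', E.U_V_Q (h.trans h')]

lemma norm_U_apply_le {t s s' : ℝ} (h : t ≤ s) (h' : s ≤ s') (w : X) :
    ‖E.U s' s w‖ ≤ (E.N + ‖E.U s' t‖ * E.N) * ‖w‖ := by
  have hsplit : E.U s' s w = E.U s' s (E.P s w) + E.U s' t (E.V t s (E.Q s w)) := by
    rw [← E.U_Q_eq_U_V_Q h h', ← map_add, Q_apply, add_sub_cancel]
  rw [hsplit, add_mul, mul_assoc]
  refine (norm_add_le _ _).trans (add_le_add (E.norm_U_P_le h' w) ?_)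
  exact (E.U s' t).le_opNorm_of_le (E.norm_V_Q_le h w)

lemma continuousOn_U_apply_left (s : ℝ) (x : X) : ContinuousOn (fun t => E.U t s x) (Ici s) :=
  (E.U_cont x).comp (continuous_id.prodMk continuous_const).continuousOn fun _ ht => ht

lemma continuousOn_U_apply_right (t : ℝ) (x : X) : ContinuousOn (fun s => E.U t s x) (Iic t) :=
  (E.U_cont x).comp (continuous_const.prodMk continuous_id).continuousOn fun _ hs => hs

lemma continuousAt_G_apply_left {s t₀ : ℝ} (h : t₀ ≠ s) (x : X) :
    ContinuousAt (fun t => E.G t s x) t₀ := by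
  rcases h.lt_or_gt with h | h
  · -- `V t s` is only known as an inverse; transport it from the fixed time `t₀ - 1` by `U`.
    have hU : ContinuousAt (fun t => -E.U t (t₀ - 1) (E.V (t₀ - 1) s (E.Q s x))) t₀ :=
      ((E.continuousOn_U_apply_left _ _).continuousAt (Ici_mem_nhds (sub_one_lt t₀))).neg
    refine hU.congr (eventually_of_mem (Ioo_mem_nhds (sub_one_lt t₀) h) fun t ht => ?_)
    dsimp only
    rw [E.U_V_Q_of_le ht.1.le ht.2.le, E.G_apply_of_le ht.2.le]
  · have hPU : ContinuousAt (fun t => E.P t (E.U t s x)) t₀ :=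
      ContinuousAt.clm_apply_of_eventually_bounded (E.P_cont _).continuousAt
        ((E.continuousOn_U_apply_left s x).continuousAt (Ici_mem_nhds h))
        (.of_forall E.norm_P_apply_le)
    exact hPU.congr (eventually_of_mem (Ioi_mem_nhds h) fun t ht => (E.G_apply_of_lt ht x).symm)

lemma continuousAt_G_apply_right {t s₀ : ℝ} (h : s₀ ≠ t) (x : X) :
    ContinuousAt (fun s => E.G t s x) s₀ := by
  rcases h.lt_or_gt with h | h
  · have hPU : ContinuousAt (fun s => E.P t (E.U t s x)) s₀ :=
      (E.P t).continuous.continuousAt.comp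
        ((E.continuousOn_U_apply_right t x).continuousAt (Iic_mem_nhds h))
    exact hPU.congr (eventually_of_mem (Iio_mem_nhds h) fun s hs => (E.G_apply_of_lt hs x).symm)
  · have hQ : ContinuousAt (fun s => E.Q s x) s₀ :=
      (continuous_const.sub (E.P_cont x)).continuousAt
    have hUQ : ContinuousAt (fun s => E.U (s₀ + 1) s (E.Q s x)) s₀ :=
      ContinuousAt.clm_apply_of_eventually_bounded
        ((E.continuousOn_U_apply_right _ _).continuousAt (Iic_mem_nhds (by linarith))) hQ
        (eventually_of_mem (Ioo_mem_nhds h (lt_add_one s₀)) fun s hs =>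
          E.norm_U_apply_le hs.1.le hs.2.le)
    have hVUQ : ContinuousAt (fun s => -E.V t (s₀ + 1) (E.U (s₀ + 1) s (E.Q s x))) s₀ :=
      ((E.V t (s₀ + 1)).continuous.continuousAt.comp hUQ).neg
    refine hVUQ.congr (eventually_of_mem (Ioo_mem_nhds h (lt_add_one s₀)) fun s hs => ?_)
    dsimp only
    rw [E.V_U_Q hs.1.le hs.2.le, E.G_apply_of_le hs.1.le]

lemma continuousAt_G_apply_comp {t s₀ : ℝ} (h : s₀ ≠ t) {f : ℝ → X} (hf : Continuous f) :
    ContinuousAt (fun s => E.G t s (f s)) s₀ :=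
  ContinuousAt.clm_apply_of_eventually_bounded (E.continuousAt_G_apply_right h _)
    hf.continuousAt (.of_forall fun s => (E.G t s).le_of_opNorm_le (E.norm_G_le_N t s))

lemma aestronglyMeasurable_G_apply (t : ℝ) {f : ℝ → X} (hf : Continuous f) :
    AEStronglyMeasurable (fun s => E.G t s (f s)) := by
  rw [← restrict_compl_singleton (μ := volume) t]
  exact ContinuousOn.aestronglyMeasurable
    (fun s hs => (E.continuousAt_G_apply_comp hs hf).continuousWithinAt)
    (measurableSet_singleton t).compl

lemma norm_G_apply_le {M : ℝ} {x : X} (hx : ‖x‖ ≤ M) (t s : ℝ) :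
    ‖E.G t s x‖ ≤ E.N * M * exp (-E.β * |t - s|) :=
  ((E.G t s).le_of_opNorm_le_of_le (E.norm_G_le t s) hx).trans_eq (by ring)

lemma integrable_G_apply (t : ℝ) {f : ℝ → X} (hf : Continuous f) {M : ℝ}
    (hM : ∀ s, ‖f s‖ ≤ M) : Integrable fun s => E.G t s (f s) :=
  ((integrable_exp_neg_mul_abs_sub E.β_pos t).const_mul (E.N * M)).mono'
    (E.aestronglyMeasurable_G_apply t hf) (.of_forall fun s => E.norm_G_apply_le (hM s) t s)

lemma norm_integral_G_apply_le (t : ℝ) {f : ℝ → X} {M : ℝ} (hM : ∀ s, ‖f s‖ ≤ M) :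
    ‖∫ s, E.G t s (f s)‖ ≤ 2 * E.N * M / E.β := by
  refine (norm_integral_le_of_norm_le
    ((integrable_exp_neg_mul_abs_sub E.β_pos t).const_mul (E.N * M))
    (.of_forall fun s => E.norm_G_apply_le (hM s) t s)).trans_eq ?_
  rw [integral_const_mul, integral_exp_neg_mul_abs_sub E.β_pos]
  ring

lemma continuous_integral_G_apply {f : ℝ → X} (hf : Continuous f) {M : ℝ}
    (hM : ∀ s, ‖f s‖ ≤ M) : Continuous fun t => ∫ s, E.G t s (f s) := by
  have hNM : 0 ≤ E.N * M := mul_nonneg E.N_pos.le ((norm_nonneg _).trans (hM 0))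
  refine continuous_iff_continuousAt.2 fun t₀ => ?_
  refine tendsto_integral_filter_of_dominated_convergence
    (fun s => E.N * M * (exp E.β * exp (-E.β * |t₀ - s|)))
    (.of_forall fun t => E.aestronglyMeasurable_G_apply t hf) ?_
    (((integrable_exp_neg_mul_abs_sub E.β_pos t₀).const_mul _).const_mul _) ?_
  · filter_upwards [Metric.closedBall_mem_nhds t₀ one_pos] with t ht
    refine .of_forall fun s => (E.norm_G_apply_le (hM s) t s).trans ?_
    exact mul_le_mul_of_nonneg_left (exp_neg_mul_abs_sub_le E.β_pos.le ht) hNM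
  · filter_upwards [Measure.ae_ne volume t₀] with s hs
    exact E.continuousAt_G_apply_left hs.symm (f s)

def greenPeriods (η ε : ℝ) : Set ℝ :=
  {T | ∀ t s, η ≤ |t - s| → ‖E.G (t + T) (s + T) - E.G t s‖ ≤ ε}

lemma ExpAP.isRelativelyDense_greenPeriods {E : EvolutionDichotomy X} (hE : E.ExpAP) {η ε : ℝ}
    (hη : 0 < η) (hε : 0 < ε) : IsRelativelyDense (E.greenPeriods η ε) := by
  obtain ⟨γ, hγ, l, hl, hT⟩ := hE η hη ε hε
  refine ⟨l, hl, fun a => (hT a).imp fun T ⟨hTa, hTG⟩ => ⟨hTa, fun t s hts => ?_⟩⟩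
  exact (hTG t s hts).trans (mul_le_of_le_one_right hε.le (exp_neg_mul_abs_le_one hγ.le _))

lemma sub_mem_greenPeriods {η ε ε' v w : ℝ} (hv : v ∈ E.greenPeriods η ε)
    (hw : w ∈ E.greenPeriods η ε') : v - w ∈ E.greenPeriods η (ε + ε') := by
  intro t s hts
  have hts' : η ≤ |t - w - (s - w)| := by rwa [sub_sub_sub_cancel_right]
  have hv' := hv (t - w) (s - w) hts'
  have hw' := hw (t - w) (s - w) hts'
  rw [show t - w + v = t + (v - w) by ring, show s - w + v = s + (v - w) by ring] at hv'
  rw [sub_add_cancel, sub_add_cancel, norm_sub_rev] at hw'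
  exact (norm_sub_le_norm_sub_add_norm_sub _ _ _).trans (add_le_add hv' hw')

lemma norm_G_shift_sub_le (T t s : ℝ) : ‖E.G (t + T) (s + T) - E.G t s‖ ≤ 2 * E.N :=
  (norm_sub_le _ _).trans (by linarith [E.norm_G_le_N (t + T) (s + T), E.norm_G_le_N t s])

lemma norm_G_shift_sub_le_of_mem_greenPeriods {η ε T t s : ℝ} (hT : T ∈ E.greenPeriods η ε)
    (hε : 0 ≤ ε) (hts : η ≤ |t - s|) :
    ‖E.G (t + T) (s + T) - E.G t s‖ ≤ √(2 * E.N * ε) * exp (-(E.β / 2) * |t - s|) := by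
  have hdecay : ‖E.G (t + T) (s + T) - E.G t s‖ ≤ 2 * E.N * exp (-E.β * |t - s|) := by
    have h₁ := E.norm_G_le (t + T) (s + T)
    rw [add_sub_add_right_eq_sub] at h₁
    linarith [norm_sub_le (E.G (t + T) (s + T)) (E.G t s), E.norm_G_le t s]
  refine (le_min (hT t s hts) hdecay).trans ((min_le_sqrt_mul hε (by
    have := E.N_pos; positivity)).trans_eq ?_)
  rw [show -(E.β / 2) * |t - s| = -E.β * |t - s| / 2 by ring, exp_half, ← sqrt_mul (by
    have := E.N_pos; positivity)]
  ring_nf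

lemma norm_integral_G_apply_shift_sub_le {g : ℝ → X} (hg : Continuous g) {M : ℝ}
    (hM : ∀ s, ‖g s‖ ≤ M) {T η ε₁ ε₂ : ℝ} (hη : 0 ≤ η) (hε₂ : 0 ≤ ε₂)
    (hT₁ : ∀ t, ‖g (t + T) - g t‖ ≤ ε₁) (hT₂ : T ∈ E.greenPeriods η ε₂) (t : ℝ) :
    ‖(∫ s, E.G (t + T) s (g s)) - ∫ s, E.G t s (g s)‖ ≤
      4 * E.N * M * η + 4 * √(2 * E.N * ε₂) * M / E.β + 2 * E.N * ε₁ / E.β := by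
  have hM0 : 0 ≤ M := (norm_nonneg _).trans (hM 0)
  have hgT : Continuous fun s => g (s + T) := hg.comp (continuous_add_const T)
  have hshift : ∀ s, ‖g (s + T)‖ ≤ M := fun s => hM (s + T)
  have hA := (E.integrable_G_apply (t + T) hg hM).comp_add_right T
  have hB := E.integrable_G_apply t hgT hshift
  have hC := E.integrable_G_apply t hg hM
  have hsplit : (∫ s, E.G (t + T) s (g s)) - ∫ s, E.G t s (g s) =
      (∫ s, (E.G (t + T) (s + T) - E.G t s) (g (s + T))) + ∫ s, E.G t s (g (s + T) - g s) := by
    rw [← integral_add_right_eq_self (fun s => E.G (t + T) s (g s)) T,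
      ← sub_add_sub_cancel _ (∫ s, E.G t s (g (s + T))), ← integral_sub hA hB,
      ← integral_sub hB hC]
    simp only [sub_apply, map_sub]
  have hnear : ‖∫ s, (E.G (t + T) (s + T) - E.G t s) (g (s + T))‖ ≤
      (∫ _ in (t - η)..(t + η), 2 * E.N * M) + 2 * (√(2 * E.N * ε₂) * M) / (E.β / 2) :=
    norm_integral_le_of_local_of_tail continuous_const hη (half_pos E.β_pos) (by positivity)
      (fun s _ => ((E.G _ _ - E.G t s).le_of_opNorm_le_of_le (E.norm_G_shift_sub_le T t s)
        (hshift s)))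
      (fun s hs => ((E.G _ _ - E.G t s).le_of_opNorm_le_of_le
        (E.norm_G_shift_sub_le_of_mem_greenPeriods hT₂ hε₂ hs) (hshift s)).trans_eq (by ring))
  have hfar := E.norm_integral_G_apply_le t fun s => hT₁ s
  rw [intervalIntegral.integral_const, smul_eq_mul] at hnear
  rw [hsplit]
  refine (norm_add_le _ _).trans ((add_le_add hnear hfar).trans_eq ?_)
  field_simp
  ring

lemma isBounded_range_integral_G_apply {f : ℝ → X} {M : ℝ} (hM : ∀ s, ‖f s‖ ≤ M) :
    IsBounded (range fun t => ∫ s, E.G t s (f s)) :=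
  isBounded_iff_forall_norm_le.2 ⟨_, forall_mem_range.2 fun t => E.norm_integral_G_apply_le t hM⟩

theorem almostPeriodic_integral_G_apply (hE : E.ExpAP) {g : ℝ → X} (hg : AlmostPeriodic g) :
    AlmostPeriodic fun t => ∫ s, E.G t s (g s) := by
  obtain ⟨M, hM⟩ := hg.2.1.exists_forall_norm_le
  refine ⟨E.continuous_integral_G_apply hg.1 hM, E.isBounded_range_integral_G_apply hM,
    fun ε hε => ?_⟩
  obtain ⟨δ, hδ, hδε⟩ : ∃ δ > 0,
      4 * E.N * M * δ + 4 * √(2 * E.N * δ) * M / E.β + 2 * E.N * δ / E.β < ε :=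
    exists_pos_lt_of_continuousAt_zero (by fun_prop) (by simp) hε
  obtain ⟨l, hl, hT⟩ := hg.isRelativelyDense_sub_inter
    (hE.isRelativelyDense_greenPeriods hδ (half_pos hδ)) hδ
  refine ⟨l, hl, fun a => ?_⟩
  obtain ⟨-, hTa, ⟨v, hv, w, hw, rfl⟩, hTg⟩ := hT a
  have hvw := E.sub_mem_greenPeriods hv hw
  rw [add_halves] at hvw
  exact ⟨v - w, hTa, fun t => (E.norm_integral_G_apply_shift_sub_le hg.1 hM hδ.le hδ.le
    (fun t => (hTg t).le) hvw t).trans_lt hδε⟩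

lemma norm_integral_G_apply_le_local_add_tail {φ : ℝ → X} (hφ : Continuous φ) {M : ℝ}
    (hM : ∀ s, ‖φ s‖ ≤ M) {R : ℝ} (hR : 0 ≤ R) (t : ℝ) :
    ‖∫ s, E.G t s (φ s)‖ ≤
      (∫ s in (t - R)..(t + R), E.N * ‖φ s‖) + 4 * E.N * M * exp (-(E.β / 2) * R) / E.β := by
  have hM0 : 0 ≤ M := (norm_nonneg _).trans (hM 0)
  refine (norm_integral_le_of_local_of_tail (f := fun s => E.N * ‖φ s‖)
    (c := E.N * M * exp (-(E.β / 2) * R)) (continuous_const.mul hφ.norm) hR (half_pos E.β_pos)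
    (by have := E.N_pos; positivity) (fun s _ => (E.G t s).le_of_opNorm_le (E.norm_G_le_N t s) _)
    (fun s hs => ((E.G t s).le_of_opNorm_le_of_le (E.norm_G_le_of_le_abs_sub hs)
      (hM s)).trans_eq (by ring))).trans_eq ?_
  field_simp
  ring

lemma tendsto_tail_bound (M : ℝ) :
    Tendsto (fun R => 4 * E.N * M * exp (-(E.β / 2) * R) / E.β) atTop (𝓝 0) := by
  have hexp := tendsto_exp_atBot.comp (tendsto_id.const_mul_atTop_of_neg (neg_lt_zero.2
    (half_pos E.β_pos)))
  simpa using (hexp.const_mul (4 * E.N * M)).div_const E.β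

theorem pap0_integral_G_apply {φ : ℝ → X} (hφ : PAP0 φ) :
    PAP0 fun t => ∫ s, E.G t s (φ s) := by
  obtain ⟨M, hM⟩ := hφ.2.1.exists_forall_norm_le
  have hu := E.continuous_integral_G_apply hφ.1 hM
  refine ⟨hu, E.isBounded_range_integral_G_apply hM,
    tendsto_mean_of_forall_le_add hu.norm (fun t => norm_nonneg _) fun ε hε => ?_⟩
  obtain ⟨R, hRε, hR⟩ :=
    (((E.tendsto_tail_bound M).eventually (gt_mem_nhds hε)).and (eventually_ge_atTop 0)).exists
  have hNφ : Continuous fun s => E.N * ‖φ s‖ := continuous_const.mul hφ.1.norm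
  refine ⟨_, continuous_integral_sub_add hNφ R, tendsto_mean_integral_sub_add hNφ
    (fun s => by have := E.N_pos; positivity) ?_ hR, fun t =>
    (E.norm_integral_G_apply_le_local_add_tail hφ.1 hM hR t).trans (by gcongr)⟩
  rw [mean_const_mul, ← mul_zero E.N]
  exact hφ.2.2.const_mul E.N

end EvolutionDichotomy


theorem green_convolution_pseudo_almost_periodic_general
    {X : Type*} [NormedAddCommGroup X] [NormedSpace ℝ X]
    (E : EvolutionDichotomy X) (hE : E.ExpAP)
    (f g φ : ℝ → X)
    (hg : AlmostPeriodic g) (hφ : PAP0 φ)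
    (hf : ∀ t : ℝ, f t = g t + φ t) :
    PseudoAP (fun t : ℝ => ∫ s : ℝ, E.G t s (f s)) ∧
    AlmostPeriodic (fun t : ℝ => ∫ s : ℝ, E.G t s (g s)) ∧
    PAP0 (fun t : ℝ => ∫ s : ℝ, E.G t s (φ s)) := by
  have hAP := E.almostPeriodic_integral_G_apply hE hg
  have hPAP := E.pap0_integral_G_apply hφ
  obtain ⟨Mg, hMg⟩ := hg.2.1.exists_forall_norm_le
  obtain ⟨Mφ, hMφ⟩ := hφ.2.1.exists_forall_norm_le
  refine ⟨⟨_, _, hAP, hPAP, fun t => ?_⟩, hAP, hPAP⟩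
  simp only [hf, map_add]
  exact integral_add (E.integrable_G_apply t hg.1 hMg) (E.integrable_G_apply t hφ.1 hMφ)

/-- if the Green function is exponentially almost periodic and
`f = g + φ` is pseudo almost periodic (`g` almost periodic, `φ ∈ PAP₀`), then
`u(t) = ∫_ℝ G(t,s) f(s) ds` is pseudo almost periodic; more precisely
`t ↦ ∫_ℝ G(t,s) g(s) ds` is almost periodic and
`t ↦ ∫_ℝ G(t,s) φ(s) ds` belongs to `PAP₀`. -/
theorem green_convolution_pseudo_almost_periodic
    {X : Type*} [NormedAddCommGroup X] [NormedSpace ℝ X] [CompleteSpace X]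
    (E : EvolutionDichotomy X) (hE : E.ExpAP)
    (f g φ : ℝ → X)
    (hg : AlmostPeriodic g) (hφ : PAP0 φ)
    (hf : ∀ t : ℝ, f t = g t + φ t) :
    PseudoAP (fun t : ℝ => ∫ s : ℝ, E.G t s (f s)) ∧
    AlmostPeriodic (fun t : ℝ => ∫ s : ℝ, E.G t s (g s)) ∧
    PAP0 (fun t : ℝ => ∫ s : ℝ, E.G t s (φ s)) :=
  green_convolution_pseudo_almost_periodic_general E hE f g φ hg hφ hf
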